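/- arXiv:2006.03578 — 7 statements merged into one kernel-verified Lean document; each statement's English description precedes it below -/
import Mathlib

section
/- Let G be a (2P_2, \overline{P_2+P_3})-free atom containing an induced 5-cycle on vertices v_1,…,v_5. Then for every i ∈ {1,…,5} (indices modulo 5), the sets V_{{i}}, V_{{i,i+1}} and V_{{i-1,i,i+1}} are all empty; equivalently, no vertex x outside {v_1,…,v_5} satisfies N(x) ∩ {v_1,…,v_5} = {v_i}, {v_i, v_{i+1}} or {v_{i-1}, v_i, v_{i+1}}. -/
open SimpleGraph

/-- The graph `2P₂`: two disjoint edges, on vertex set `Fin 4`. -/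
def twoP2 : SimpleGraph (Fin 4) :=
  SimpleGraph.fromRel (fun a b => (a = 0 ∧ b = 1) ∨ (a = 2 ∧ b = 3))

/-- The graph `P₂ + P₃`: disjoint union of a path on 2 vertices (0-1)
and a path on 3 vertices (2-3-4), on vertex set `Fin 5`. -/
def P2P3 : SimpleGraph (Fin 5) :=
  SimpleGraph.fromRel (fun a b => (a = 0 ∧ b = 1) ∨ (a = 2 ∧ b = 3) ∨ (a = 3 ∧ b = 4))

/-- `G` is `H`-free: `G` contains no induced subgraph isomorphic to `H`. -/
def Free {W V : Type*} (H : SimpleGraph W) (G : SimpleGraph V) : Prop :=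
  IsEmpty (H ↪g G)

/-- `G` has no clique cut-set: for every clique `K`, deleting the vertices of `K`
does not disconnect the graph.  A graph with this property is called an atom. -/
def NoCliqueCutset {V : Type*} (G : SimpleGraph V) : Prop :=
  ∀ K : Set V, G.IsClique K → (G.induce (Kᶜ : Set V)).Preconnected

/-- For `S ⊆ Fin 5`, the set of vertices `x` outside the cycle `v 0, …, v 4` whose
neighbourhood on the cycle is exactly `{v i : i ∈ S}`. -/
def vSet {V : Type*} (G : SimpleGraph V) (v : Fin 5 → V) (S : Set (Fin 5)) : Set V :=
  {x | (∀ i, x ≠ v i) ∧ ∀ i, (G.Adj x (v i) ↔ i ∈ S)}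

/-!
If `x` is adjacent to `v i` but to neither `v (i + 2)` nor `v (i + 3)`, then the edges `x v_i` and
`v_{i+2} v_{i+3}` induce a `2P₂`. Each of the patterns `{i}`, `{i, i+1}`, `{i-1, i, i+1}` contains
such an `i` and misses `i + 2` and `i + 3`.
-/

def SimpleGraph.Embedding.ofAdjIff {W V : Type*} {H : SimpleGraph W} {G : SimpleGraph V}
    (f : W → V) (hf : ∀ a b, G.Adj (f a) (f b) ↔ H.Adj a b)
    (hH : Function.Injective H.neighborSet) : H ↪g G where
  toFun := f
  inj' a b hab := hH <| Set.ext fun c => by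
    simp only [mem_neighborSet, ← hf, hab]
  map_rel_iff' := hf _ _

lemma twoP2_neighborSet_injective : Function.Injective twoP2.neighborSet := by
  intro a b hab
  simp only [Set.ext_iff, mem_neighborSet] at hab
  revert a b
  simp only [twoP2, fromRel_adj]
  decide

lemma adj_of_free_twoP2 {V : Type*} {G : SimpleGraph V} (h : _root_.Free twoP2 G)
    {a b c d : V} (hab : G.Adj a b) (hcd : G.Adj c d) :
    G.Adj a c ∨ G.Adj a d ∨ G.Adj b c ∨ G.Adj b d := by
  by_contra! hno
  refine h.false (Embedding.ofAdjIff ![a, b, c, d] (fun p q => ?_) twoP2_neighborSet_injective)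
  fin_cases p <;> fin_cases q <;> simp [twoP2, hab, hcd, hab.symm, hcd.symm, hno, G.adj_comm]

section FiveCycle

variable {V : Type*} {G : SimpleGraph V} {v : Fin 5 → V}

lemma adj_add_two_or_adj_add_three (hfree : _root_.Free twoP2 G)
    (hC : ∀ i j : Fin 5, G.Adj (v i) (v j) ↔ (j = i + 1 ∨ i = j + 1))
    {x : V} {i : Fin 5} (hx : G.Adj x (v i)) :
    G.Adj x (v (i + 2)) ∨ G.Adj x (v (i + 3)) := by
  have hedge : G.Adj (v (i + 2)) (v (i + 3)) := (hC _ _).2 (by grind)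
  have hno2 : ¬G.Adj (v i) (v (i + 2)) := by rw [hC]; grind
  have hno3 : ¬G.Adj (v i) (v (i + 3)) := by rw [hC]; grind
  have := adj_of_free_twoP2 hfree hx hedge
  tauto

lemma vSet_eq_empty (hfree : _root_.Free twoP2 G)
    (hC : ∀ i j : Fin 5, G.Adj (v i) (v j) ↔ (j = i + 1 ∨ i = j + 1))
    {S : Set (Fin 5)} {i : Fin 5} (hi : i ∈ S) (hi2 : i + 2 ∉ S) (hi3 : i + 3 ∉ S) :
    vSet G v S = ∅ := by
  refine Set.eq_empty_of_forall_notMem fun x ⟨_, hxS⟩ => ?_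
  rcases adj_add_two_or_adj_add_three hfree hC ((hxS i).2 hi) with h | h
  exacts [hi2 ((hxS _).1 h), hi3 ((hxS _).1 h)]

end FiveCycle

theorem clm_C5_V1_V12_V123_empty_general {V : Type*} (G : SimpleGraph V)
    (hfree1 : _root_.Free twoP2 G)
    (v : Fin 5 → V)
    (hC : ∀ i j : Fin 5, G.Adj (v i) (v j) ↔ (j = i + 1 ∨ i = j + 1)) :
    ∀ i : Fin 5, vSet G v {i} = ∅ ∧ vSet G v {i, i + 1} = ∅ ∧
      vSet G v {i - 1, i, i + 1} = ∅ := by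
  intro i
  refine ⟨?_, ?_, ?_⟩ <;> apply vSet_eq_empty hfree1 hC (i := i) <;> grind

theorem clm_C5_V1_V12_V123_empty {V : Type*} [Fintype V] (G : SimpleGraph V)
    (hfree1 : _root_.Free twoP2 G) (hfree2 : _root_.Free (P2P3ᶜ) G)
    (hatom : NoCliqueCutset G)
    (v : Fin 5 → V) (hv : Function.Injective v)
    (hC : ∀ i j : Fin 5, G.Adj (v i) (v j) ↔ (j = i + 1 ∨ i = j + 1)) :
    ∀ i : Fin 5, vSet G v {i} = ∅ ∧ vSet G v {i, i + 1} = ∅ ∧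
      vSet G v {i - 1, i, i + 1} = ∅ :=
  clm_C5_V1_V12_V123_empty_general G hfree1 v hC
end

section
/- Let G be a (2P_2, \overline{P_2+P_3})-free atom containing an induced 5-cycle on vertices v_1,…,v_5. Then for every i ∈ {1,…,5} (indices modulo 5), the set V_∅ ∪ V_{{i,i+2}} is an independent set of G. -/
open SimpleGraph

/-!
Vertices of `V_∅ ∪ V_{i,i+2}` see neither `v (i+3)` nor `v (i+4)`, which are adjacent on the
cycle; an edge inside this set would therefore form an induced `2P₂` with `v (i+3) v (i+4)`.
-/

def twoP2Embedding {V : Type*} {G : SimpleGraph V} {x y a b : V} (hxy : G.Adj x y)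
    (hab : G.Adj a b) (hxa : ¬ G.Adj x a) (hxb : ¬ G.Adj x b) (hya : ¬ G.Adj y a)
    (hyb : ¬ G.Adj y b) : twoP2 ↪g G where
  toFun := ![x, y, a, b]
  inj' := by
    have hxa' : x ≠ a := fun h => hya (h ▸ hxy.symm)
    have hxb' : x ≠ b := fun h => hyb (h ▸ hxy.symm)
    have hya' : y ≠ a := fun h => hxa (h ▸ hxy)
    have hyb' : y ≠ b := fun h => hxb (h ▸ hxy)
    intro i j hij
    fin_cases i <;> fin_cases j <;> simp_all [hxy.ne, hab.ne, eq_comm]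
  map_rel_iff' {i j} := by
    have hax : ¬ G.Adj a x := fun h => hxa h.symm
    have hbx : ¬ G.Adj b x := fun h => hxb h.symm
    have hay : ¬ G.Adj a y := fun h => hya h.symm
    have hby : ¬ G.Adj b y := fun h => hyb h.symm
    change G.Adj (![x, y, a, b] i) (![x, y, a, b] j) ↔ _
    fin_cases i <;> fin_cases j <;> simp [twoP2, hxy.symm, hab.symm, *]

section vSet

variable {V : Type*} {G : SimpleGraph V} {v : Fin 5 → V} {x : V} {j : Fin 5}

theorem not_adj_of_mem_vSet {S : Set (Fin 5)} (hx : x ∈ vSet G v S) (hj : j ∉ S) :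
    ¬ G.Adj x (v j) :=
  fun h => hj ((hx.2 j).1 h)

theorem not_adj_of_mem_vSet_union {S T : Set (Fin 5)} (hx : x ∈ vSet G v S ∪ vSet G v T)
    (hS : j ∉ S) (hT : j ∉ T) : ¬ G.Adj x (v j) :=
  hx.elim (not_adj_of_mem_vSet · hS) (not_adj_of_mem_vSet · hT)

end vSet

theorem add_three_notMem_pair (i : Fin 5) : i + 3 ∉ ({i, i + 2} : Set (Fin 5)) := by
  simp only [Set.mem_insert_iff, Set.mem_singleton_iff]
  revert i; decide

theorem add_four_notMem_pair (i : Fin 5) : i + 4 ∉ ({i, i + 2} : Set (Fin 5)) := by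
  simp only [Set.mem_insert_iff, Set.mem_singleton_iff]
  revert i; decide

theorem clm_C5_V0_V13_indep_general {V : Type*} (G : SimpleGraph V)
    (hfree1 : _root_.Free twoP2 G)
    (v : Fin 5 → V)
    (hC : ∀ i j : Fin 5, G.Adj (v i) (v j) ↔ (j = i + 1 ∨ i = j + 1)) :
    ∀ i : Fin 5, ∀ x ∈ vSet G v ∅ ∪ vSet G v {i, i + 2},
      ∀ y ∈ vSet G v ∅ ∪ vSet G v {i, i + 2}, x ≠ y → ¬ G.Adj x y := by
  intro i x hx y hy _ hxy
  have hedge : G.Adj (v (i + 3)) (v (i + 4)) := (hC _ _).2 (Or.inl (by abel))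
  have hmiss : ∀ z ∈ vSet G v ∅ ∪ vSet G v {i, i + 2},
      ¬ G.Adj z (v (i + 3)) ∧ ¬ G.Adj z (v (i + 4)) := fun z hz =>
    ⟨not_adj_of_mem_vSet_union hz (Set.notMem_empty _) (add_three_notMem_pair i),
      not_adj_of_mem_vSet_union hz (Set.notMem_empty _) (add_four_notMem_pair i)⟩
  exact hfree1.false
    (twoP2Embedding hxy hedge (hmiss x hx).1 (hmiss x hx).2 (hmiss y hy).1 (hmiss y hy).2)

theorem clm_C5_V0_V13_indep {V : Type*} [Fintype V] (G : SimpleGraph V)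
    (hfree1 : _root_.Free twoP2 G) (hfree2 : _root_.Free (P2P3ᶜ) G)
    (hatom : NoCliqueCutset G)
    (v : Fin 5 → V) (hv : Function.Injective v)
    (hC : ∀ i j : Fin 5, G.Adj (v i) (v j) ↔ (j = i + 1 ∨ i = j + 1)) :
    ∀ i : Fin 5, ∀ x ∈ vSet G v ∅ ∪ vSet G v {i, i + 2},
      ∀ y ∈ vSet G v ∅ ∪ vSet G v {i, i + 2}, x ≠ y → ¬ G.Adj x y :=
  clm_C5_V0_V13_indep_general G hfree1 v hC
end

section
/- Let G be a (2P_2, \overline{P_2+P_3})-free atom containing an induced 5-cycle on vertices v_1,…,v_5. Then for every i ∈ {1,…,5} (indices modulo 5), the set V_{{i,i+1,i+3}} ∪ V_{{i,i+1,i+2,i+3}} contains at most one vertex. -/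
/-! Two distinct vertices `x`, `y` of the union are adjacent to `v i`, `v (i + 1)`, `v (i + 3)`
and not to `v (i + 4)`. If `x ~ y`, then `{v i, v (i + 3)}` together with `x, v (i + 4), y`
induces the complement of `P₂ + P₃`; if not, `{x, y}` together with `v i, v (i + 3), v (i + 1)`
does. -/

open SimpleGraph

lemma not_free_compl_P2P3 {V : Type*} {G : SimpleGraph V} {a₀ a₁ a₂ a₃ a₄ : V}
    (h₀₂ : G.Adj a₀ a₂) (h₀₃ : G.Adj a₀ a₃) (h₀₄ : G.Adj a₀ a₄)
    (h₁₂ : G.Adj a₁ a₂) (h₁₃ : G.Adj a₁ a₃) (h₁₄ : G.Adj a₁ a₄) (h₂₄ : G.Adj a₂ a₄)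
    (n₀₁ : ¬G.Adj a₀ a₁) (n₂₃ : ¬G.Adj a₂ a₃) (n₃₄ : ¬G.Adj a₃ a₄) (d₀₁ : a₀ ≠ a₁) :
    ¬_root_.Free P2P3ᶜ G := by
  have d₂₃ : a₂ ≠ a₃ := fun h => n₃₄ (h ▸ h₂₄)
  have d₃₄ : a₃ ≠ a₄ := fun h => n₂₃ (h ▸ h₂₄)
  have hinj : Function.Injective ![a₀, a₁, a₂, a₃, a₄] := by
    intro j k
    fin_cases j <;> fin_cases k <;>
      simp [d₀₁, d₀₁.symm, d₂₃, d₂₃.symm, d₃₄, d₃₄.symm, h₀₂.ne, h₀₃.ne, h₀₄.ne, h₁₂.ne,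
        h₁₃.ne, h₁₄.ne, h₂₄.ne, h₀₂.ne', h₀₃.ne', h₀₄.ne', h₁₂.ne', h₁₃.ne', h₁₄.ne', h₂₄.ne']
  have hadj (j k : Fin 5) : G.Adj (![a₀, a₁, a₂, a₃, a₄] j) (![a₀, a₁, a₂, a₃, a₄] k) ↔
      P2P3ᶜ.Adj j k := by
    fin_cases j <;> fin_cases k <;>
      simp [P2P3, fromRel, h₀₂, h₀₃, h₀₄, h₁₂, h₁₃, h₁₄, h₂₄, h₀₂.symm, h₀₃.symm, h₀₄.symm,
        h₁₂.symm, h₁₃.symm, h₁₄.symm, h₂₄.symm, n₀₁, n₂₃, n₃₄, G.adj_comm a₁ a₀,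
        G.adj_comm a₃ a₂, G.adj_comm a₄ a₃]
  exact fun hfree => hfree.false ⟨⟨_, hinj⟩, hadj _ _⟩

lemma subsingleton_of_free_compl_P2P3 {V : Type*} {G : SimpleGraph V}
    (hfree : _root_.Free P2P3ᶜ G) {a b c d : V}
    (hab : G.Adj a b) (had : G.Adj a d) (hdc : G.Adj d c) (hac : ¬G.Adj a c) (hbc : ¬G.Adj b c) :
    {x | G.Adj x a ∧ G.Adj x b ∧ G.Adj x c ∧ ¬G.Adj x d}.Subsingleton := by
  rintro x ⟨hxa, hxb, hxc, hxd⟩ y ⟨hya, hyb, hyc, hyd⟩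
  by_contra hxy
  have hne_ac : a ≠ c := fun h => hbc (h ▸ hab.symm)
  by_cases hxy' : G.Adj x y
  · exact not_free_compl_P2P3 hxa.symm had hya.symm hxc.symm hdc.symm hyc.symm hxy'
      hac hxd (fun h => hyd h.symm) hne_ac hfree
  · exact not_free_compl_P2P3 hxa hxc hxb hya hyc hyb hab hxy' hac (fun h => hbc h.symm) hxy hfree

theorem clm_C5_V124_V1234_small_general {V : Type*} (G : SimpleGraph V)
    (hfree2 : _root_.Free (P2P3ᶜ) G)
    (v : Fin 5 → V)
    (hC : ∀ i j : Fin 5, G.Adj (v i) (v j) ↔ (j = i + 1 ∨ i = j + 1)) :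
    ∀ i : Fin 5,
      (vSet G v {i, i + 1, i + 3} ∪ vSet G v {i, i + 1, i + 2, i + 3}).Subsingleton := by
  intro i
  have cycle (j k : Fin 5) : G.Adj (v (i + j)) (v (i + k)) ↔ (k = j + 1 ∨ j = k + 1) := by
    simp only [hC, add_assoc, add_right_inj]
  refine (subsingleton_of_free_compl_P2P3 hfree2 (a := v (i + 0)) (b := v (i + 1))
    (c := v (i + 3)) (d := v (i + 4)) ?_ ?_ ?_ ?_ ?_).anti ?_
  iterate 5 (rw [cycle]; decide)
  rintro x (⟨-, hx⟩ | ⟨-, hx⟩) <;>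
    simp only [Set.mem_ofPred_eq, hx, Set.mem_insert_iff, Set.mem_singleton_iff,
      add_right_inj, add_eq_left] <;>
    decide

theorem clm_C5_V124_V1234_small {V : Type*} [Fintype V] (G : SimpleGraph V)
    (hfree1 : _root_.Free twoP2 G) (hfree2 : _root_.Free (P2P3ᶜ) G)
    (hatom : NoCliqueCutset G)
    (v : Fin 5 → V) (hv : Function.Injective v)
    (hC : ∀ i j : Fin 5, G.Adj (v i) (v j) ↔ (j = i + 1 ∨ i = j + 1)) :
    ∀ i : Fin 5,
      (vSet G v {i, i + 1, i + 3} ∪ vSet G v {i, i + 1, i + 2, i + 3}).Subsingleton :=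
  clm_C5_V124_V1234_small_general G hfree2 v hC
end

section
/- Let G be a (2P_2, \overline{P_2+P_3})-free atom containing an induced 5-cycle on vertices v_1,…,v_5. Then for every i ∈ {1,…,5} (indices modulo 5), there is at most one edge between V_{{i,i+2}} and V_{{i,i-2}}; that is, there is at most one pair (x,y) with x ∈ V_{{i,i+2}}, y ∈ V_{{i,i-2}}, and x adjacent to y. -/
open SimpleGraph

/-!
Write `A = V_{i,i+2}` and `B = V_{i,i-2}`. Each of `A`, `B` misses both ends of an edge of the
cycle (`v_{i-2}v_{i-1}`, resp. `v_{i+1}v_{i+2}`), so `2P₂`-freeness makes both independent. Two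
neighbours of `x ∈ A` in `B` would, together with `x`, `v_{i-2}` and `v_i`, induce
`\overline{P₂+P₃}`; symmetrically every vertex of `B` has at most one neighbour in `A`. Two
edges between `A` and `B` with no common end would then induce a `2P₂`.
-/

section

variable {V : Type*} {G : SimpleGraph V}

theorem Free.false_of_twoP2 (h : _root_.Free twoP2 G) {a b c d : V}
    (hab : G.Adj a b) (hcd : G.Adj c d) (hac : ¬ G.Adj a c) (had : ¬ G.Adj a d)
    (hbc : ¬ G.Adj b c) (hbd : ¬ G.Adj b d) : False := by
  have hac' : a ≠ c := fun heq => had (heq ▸ hcd)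
  have had' : a ≠ d := fun heq => hac (heq ▸ hcd.symm)
  have hbc' : b ≠ c := fun heq => hbd (heq ▸ hcd)
  have hbd' : b ≠ d := fun heq => hbc (heq ▸ hcd.symm)
  refine h.false ⟨⟨![a, b, c, d], fun x y hxy => ?_⟩, fun {x y} => ?_⟩
  · fin_cases x <;> fin_cases y <;>
      simp_all [hab.ne, hab.ne', hcd.ne, hcd.ne', hac'.symm, had'.symm, hbc'.symm, hbd'.symm]
  · change G.Adj (![a, b, c, d] x) (![a, b, c, d] y) ↔ twoP2.Adj x y
    fin_cases x <;> fin_cases y <;>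
      simp_all [twoP2, fromRel_adj, hab.symm, hcd.symm, G.adj_comm c a, G.adj_comm d a,
        G.adj_comm c b, G.adj_comm d b]

theorem Free.false_of_compl_P2P3 (h : _root_.Free P2P3ᶜ G) {a b c d e : V}
    (hab : a ≠ b) (hde : d ≠ e)
    (hab' : ¬ G.Adj a b) (hcd : ¬ G.Adj c d) (hde' : ¬ G.Adj d e) (hce : G.Adj c e)
    (hac : G.Adj a c) (had : G.Adj a d) (hae : G.Adj a e)
    (hbc : G.Adj b c) (hbd : G.Adj b d) (hbe : G.Adj b e) : False := by
  have hcd' : c ≠ d := fun heq => hde' (heq ▸ hce)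
  refine h.false ⟨⟨![a, b, c, d, e], fun x y hxy => ?_⟩, fun {x y} => ?_⟩
  · fin_cases x <;> fin_cases y <;>
      simp_all [hab.symm, hcd'.symm, hde.symm, hce.ne, hce.ne', hac.ne, hac.ne', had.ne, had.ne',
        hae.ne, hae.ne', hbc.ne, hbc.ne', hbd.ne, hbd.ne', hbe.ne, hbe.ne']
  · change G.Adj (![a, b, c, d, e] x) (![a, b, c, d, e] y) ↔ P2P3ᶜ.Adj x y
    fin_cases x <;> fin_cases y <;>
      simp_all [P2P3, compl_adj, fromRel_adj, G.adj_comm b a, G.adj_comm d c, G.adj_comm e d,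
        hac.symm, had.symm, hae.symm, hbc.symm, hbd.symm, hbe.symm, hce.symm]

theorem Free.isIndepSet_of_forall_not_adj (h : _root_.Free twoP2 G) {s : Set V} {a b : V}
    (hab : G.Adj a b) (ha : ∀ x ∈ s, ¬ G.Adj x a) (hb : ∀ x ∈ s, ¬ G.Adj x b) :
    G.IsIndepSet s :=
  fun x hx y hy _ hxy => h.false_of_twoP2 hxy hab (ha x hx) (hb x hx) (ha y hy) (hb y hy)

theorem Free.subsingleton_inter_neighborSet (h : _root_.Free P2P3ᶜ G) {s : Set V}
    (hs : G.IsIndepSet s) {c d e : V} (hde : d ≠ e)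
    (hcd : ¬ G.Adj c d) (hde' : ¬ G.Adj d e) (hce : G.Adj c e)
    (hsd : ∀ x ∈ s, G.Adj x d) (hse : ∀ x ∈ s, G.Adj x e) :
    (s ∩ G.neighborSet c).Subsingleton := by
  rintro a ⟨ha, hca⟩ b ⟨hb, hcb⟩
  by_contra hab
  exact h.false_of_compl_P2P3 hab hde (hs ha hb hab) hcd hde' hce hca.symm (hsd a ha) (hse a ha)
    hcb.symm (hsd b hb) (hse b hb)

theorem Free.eq_and_eq_of_adj_of_adj (h : _root_.Free twoP2 G) {A B : Set V}
    (hA : G.IsIndepSet A) (hB : G.IsIndepSet B)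
    (hAB : ∀ a ∈ A, (B ∩ G.neighborSet a).Subsingleton)
    (hBA : ∀ b ∈ B, (A ∩ G.neighborSet b).Subsingleton)
    {x x' y y' : V} (hx : x ∈ A) (hx' : x' ∈ A) (hy : y ∈ B) (hy' : y' ∈ B)
    (hxy : G.Adj x y) (hx'y' : G.Adj x' y') : x = x' ∧ y = y' := by
  by_cases hxx' : x = x'
  · subst hxx'
    exact ⟨rfl, hAB x hx ⟨hy, hxy⟩ ⟨hy', hx'y'⟩⟩
  by_cases hyy' : y = y'
  · subst hyy'
    exact absurd (hBA y hy ⟨hx, hxy.symm⟩ ⟨hx', hx'y'.symm⟩) hxx'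
  exact (h.false_of_twoP2 hxy hx'y' (hA hx hx' hxx')
    (fun hxy' => hyy' (hAB x hx ⟨hy, hxy⟩ ⟨hy', hxy'⟩))
    (fun hyx' => hxx' (hBA y hy ⟨hx, hxy.symm⟩ ⟨hx', hyx'⟩)) (hB hy hy' hyy')).elim

section Cycle

variable {v : Fin 5 → V}

theorem isIndepSet_vSet (h : _root_.Free twoP2 G) {S : Set (Fin 5)} {j k : Fin 5}
    (hjk : G.Adj (v j) (v k)) (hj : j ∉ S) (hk : k ∉ S) : G.IsIndepSet (vSet G v S) :=
  h.isIndepSet_of_forall_not_adj hjk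
    (fun _ hx => (hx.2 j).not.2 hj) (fun _ hx => (hx.2 k).not.2 hk)

theorem subsingleton_vSet_inter_neighborSet (h : _root_.Free P2P3ᶜ G) (hv : Function.Injective v)
    {S T : Set (Fin 5)} (hT : G.IsIndepSet (vSet G v T)) {i k : Fin 5}
    (hiS : i ∈ S) (hiT : i ∈ T) (hkS : k ∉ S) (hkT : k ∈ T) (hki : ¬ G.Adj (v k) (v i))
    {x : V} (hx : x ∈ vSet G v S) : (vSet G v T ∩ G.neighborSet x).Subsingleton :=
  h.subsingleton_inter_neighborSet hT (hv.ne (ne_of_mem_of_not_mem hiS hkS).symm)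
    ((hx.2 k).not.2 hkS) hki ((hx.2 i).2 hiS)
    (fun _ hy => (hy.2 k).2 hkT) (fun _ hy => (hy.2 i).2 hiT)

end Cycle

end

theorem clm_C5_V13_V35_almost_anticomplete_general {V : Type*} (G : SimpleGraph V)
    (hfree1 : _root_.Free twoP2 G) (hfree2 : _root_.Free (P2P3ᶜ) G)
    (v : Fin 5 → V) (hv : Function.Injective v)
    (hC : ∀ i j : Fin 5, G.Adj (v i) (v j) ↔ (j = i + 1 ∨ i = j + 1)) :
    ∀ i : Fin 5, ∀ x ∈ vSet G v {i, i + 2}, ∀ y ∈ vSet G v {i, i - 2},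
      ∀ x' ∈ vSet G v {i, i + 2}, ∀ y' ∈ vSet G v {i, i - 2},
      G.Adj x y → G.Adj x' y' → x = x' ∧ y = y' := by
  intro i x hx y hy x' hx' y' hy'
  have hA : G.IsIndepSet (vSet G v {i, i + 2}) :=
    isIndepSet_vSet hfree1 ((hC (i - 2) (i - 1)).2 (by grind)) (by grind) (by grind)
  have hB : G.IsIndepSet (vSet G v {i, i - 2}) :=
    isIndepSet_vSet hfree1 ((hC (i + 1) (i + 2)).2 (by grind)) (by grind) (by grind)
  refine hfree1.eq_and_eq_of_adj_of_adj hA hB (fun a ha => ?_) (fun b hb => ?_) hx hx' hy hy'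
  · exact subsingleton_vSet_inter_neighborSet hfree2 hv hB (i := i) (k := i - 2)
      (by simp) (by simp) (by grind) (by simp) (by rw [hC]; grind) ha
  · exact subsingleton_vSet_inter_neighborSet hfree2 hv hA (i := i) (k := i + 2)
      (by simp) (by simp) (by grind) (by simp) (by rw [hC]; grind) hb

theorem clm_C5_V13_V35_almost_anticomplete {V : Type*} [Fintype V] (G : SimpleGraph V)
    (hfree1 : _root_.Free twoP2 G) (hfree2 : _root_.Free (P2P3ᶜ) G)
    (hatom : NoCliqueCutset G)
    (v : Fin 5 → V) (hv : Function.Injective v)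
    (hC : ∀ i j : Fin 5, G.Adj (v i) (v j) ↔ (j = i + 1 ∨ i = j + 1)) :
    ∀ i : Fin 5, ∀ x ∈ vSet G v {i, i + 2}, ∀ y ∈ vSet G v {i, i - 2},
      ∀ x' ∈ vSet G v {i, i + 2}, ∀ y' ∈ vSet G v {i, i - 2},
      G.Adj x y → G.Adj x' y' → x = x' ∧ y = y' :=
  clm_C5_V13_V35_almost_anticomplete_general G hfree1 hfree2 v hv hC
end

section
/- Let G be a (2P_2, \overline{P_2+P_3})-free atom containing an induced 5-cycle on vertices v_1,…,v_5. Then for every i ∈ {1,…,5} (indices modulo 5), every vertex of V_{{i,i+2}} is adjacent to every vertex of V_{{i-1,i+1}} ∪ V_{{i+1,i+3}}. -/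
open SimpleGraph

theorem _root_.Free.adj_of_twoP2 {V : Type*} {G : SimpleGraph V} (hfree : _root_.Free twoP2 G)
    {a b c d : V} (hab : G.Adj a b) (hcd : G.Adj c d)
    (hbc : ¬G.Adj b c) (hbd : ¬G.Adj b d) (had : ¬G.Adj a d) : G.Adj a c := by
  by_contra hac
  -- The missing cross edges already force the four vertices to be distinct.
  have nac : a ≠ c := by rintro rfl; exact had hcd
  have nad : a ≠ d := by rintro rfl; exact hac hcd.symm
  have nbc : b ≠ c := by rintro rfl; exact hbd hcd
  have nbd : b ≠ d := by rintro rfl; exact hbc hcd.symm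
  refine hfree.false ⟨⟨![a, b, c, d], ?_⟩, ?_⟩
  · intro i j h
    fin_cases i <;> fin_cases j <;>
      simp_all [hab.ne, hab.ne', hcd.ne, hcd.ne', nac.symm, nad.symm, nbc.symm, nbd.symm]
  · intro i j
    change G.Adj (![a, b, c, d] i) (![a, b, c, d] j) ↔ twoP2.Adj i j
    fin_cases i <;> fin_cases j <;>
      simp [twoP2, hab, hcd, hab.symm, hcd.symm, hac, had, hbc, hbd, G.adj_comm c a,
        G.adj_comm d a, G.adj_comm c b, G.adj_comm d b]

theorem adj_iff_of_mem_vSet {V : Type*} {G : SimpleGraph V} {v : Fin 5 → V}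
    {S : Set (Fin 5)} {x : V} (hx : x ∈ vSet G v S) (j : Fin 5) :
    G.Adj x (v j) ↔ j ∈ S :=
  hx.2 j

theorem adj_of_mem_vSet {V : Type*} {G : SimpleGraph V} (hfree : _root_.Free twoP2 G)
    {v : Fin 5 → V} {S T : Set (Fin 5)} {x y : V} (hx : x ∈ vSet G v S) (hy : y ∈ vSet G v T)
    {a b : Fin 5} (haS : a ∈ S) (haT : a ∉ T) (hbT : b ∈ T) (hbS : b ∉ S)
    (hab : ¬G.Adj (v a) (v b)) : G.Adj x y :=
  hfree.adj_of_twoP2 ((adj_iff_of_mem_vSet hx a).2 haS) ((adj_iff_of_mem_vSet hy b).2 hbT)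
    (fun h => haT ((adj_iff_of_mem_vSet hy a).1 h.symm)) hab
    (fun h => hbS ((adj_iff_of_mem_vSet hx b).1 h))

theorem clm_C5_V13_V24_complete_general {V : Type*} (G : SimpleGraph V)
    (hfree1 : _root_.Free twoP2 G)
    (v : Fin 5 → V)
    (hC : ∀ i j : Fin 5, G.Adj (v i) (v j) ↔ (j = i + 1 ∨ i = j + 1)) :
    ∀ i : Fin 5, ∀ x ∈ vSet G v {i, i + 2},
      ∀ y ∈ vSet G v {i - 1, i + 1} ∪ vSet G v {i + 1, i + 3}, G.Adj x y := by
  intro i x hx y hy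
  rcases hy with hy | hy
  · refine adj_of_mem_vSet hfree1 hx hy (a := i + 2) (b := i - 1) ?_ ?_ ?_ ?_ ?_ <;>
      simp only [hC, Set.mem_insert_iff, Set.mem_singleton_iff] <;> fin_cases i <;> decide
  · refine adj_of_mem_vSet hfree1 hx hy (a := i) (b := i + 3) ?_ ?_ ?_ ?_ ?_ <;>
      simp only [hC, Set.mem_insert_iff, Set.mem_singleton_iff] <;> fin_cases i <;> decide

theorem clm_C5_V13_V24_complete {V : Type*} [Fintype V] (G : SimpleGraph V)
    (hfree1 : _root_.Free twoP2 G) (hfree2 : _root_.Free (P2P3ᶜ) G)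
    (hatom : NoCliqueCutset G)
    (v : Fin 5 → V) (hv : Function.Injective v)
    (hC : ∀ i j : Fin 5, G.Adj (v i) (v j) ↔ (j = i + 1 ∨ i = j + 1)) :
    ∀ i : Fin 5, ∀ x ∈ vSet G v {i, i + 2},
      ∀ y ∈ vSet G v {i - 1, i + 1} ∪ vSet G v {i + 1, i + 3}, G.Adj x y :=
  clm_C5_V13_V24_complete_general G hfree1 v hC
end

section
/- Let F be a connected finite simple graph with at least two vertices, and let F' be the graph with vertex set V(F) × {0,1} in which (u,a) and (v,b) are adjacent if and only if u and v are adjacent in F (so each vertex of F is duplicated by a non-adjacent false twin). Then F' has no clique cut-set, i.e., F' is an atom. -/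
open SimpleGraph

/-!
Every vertex `w` of `F` keeps a copy `(w, s w)` outside the clique `K`, since the two copies of
`w` are non-adjacent. The section `s` embeds `F` homomorphically into `F' - K`, so the kept copies
are mutually reachable; any other copy `(u, a)` outside `K` shares the neighbours of `(u, s u)`, and
`u` has a neighbour because `F` is connected with at least two vertices.
-/

namespace SimpleGraph

variable {V β : Type*} {F : SimpleGraph V}

theorem IsClique.exists_notMem_comap_fst [Nontrivial β] {K : Set (V × β)}
    (hK : (F.comap Prod.fst).IsClique K) (w : V) : ∃ c, (w, c) ∉ K := by
  obtain ⟨a, b, hab⟩ := exists_pair_ne β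
  by_contra! hw
  exact F.loopless.irrefl w (hK (hw a) (hw b) (by simpa using hab))

def homInduceComplComapFst {K : Set (V × β)} (s : V → β) (hs : ∀ u, (u, s u) ∉ K) :
    F →g (F.comap Prod.fst).induce Kᶜ where
  toFun u := ⟨(u, s u), hs u⟩
  map_rel' h := h

theorem Preconnected.induce_compl_comap_fst [Nontrivial V] (hF : F.Preconnected)
    {K : Set (V × β)} (hK : ∀ u, ∃ c, (u, c) ∉ K) :
    ((F.comap Prod.fst).induce Kᶜ).Preconnected := by
  choose s hs using hK
  let φ := homInduceComplComapFst (F := F) s hs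
  have reachable_φ : ∀ x, ((F.comap Prod.fst).induce Kᶜ).Reachable x (φ x.1.1) := by
    rintro ⟨⟨u, a⟩, hu⟩
    obtain ⟨w, huw⟩ := hF.exists_adj_of_nontrivial u
    have h₁ : ((F.comap Prod.fst).induce Kᶜ).Adj ⟨(u, a), hu⟩ (φ w) := huw
    have h₂ : ((F.comap Prod.fst).induce Kᶜ).Adj (φ w) (φ u) := huw.symm
    exact h₁.reachable.trans h₂.reachable
  intro x y
  exact (reachable_φ x).trans (((hF _ _).map φ).trans (reachable_φ y).symm)

end SimpleGraph

theorem falseTwinDuplication_is_atom_general {V : Type*} [Nontrivial V]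
    (F : SimpleGraph V) (hconn : F.Connected) :
    NoCliqueCutset (SimpleGraph.comap (Prod.fst : V × Bool → V) F) :=
  fun _ hK => hconn.preconnected.induce_compl_comap_fst hK.exists_notMem_comap_fst

/-- If `F` is a connected graph on at least two vertices, then the graph `F'` obtained by
duplicating every vertex by a (non-adjacent) false twin — i.e. the graph on `V × Bool` with
`(u,a)` adjacent to `(v,b)` iff `u` is adjacent to `v` in `F` — has no clique cut-set. -/
theorem falseTwinDuplication_is_atom {V : Type*} [Fintype V] [Nontrivial V]
    (F : SimpleGraph V) (hconn : F.Connected) :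
    NoCliqueCutset (SimpleGraph.comap (Prod.fst : V × Bool → V) F) :=
  falseTwinDuplication_is_atom_general F hconn
end

section
/- Let F be a finite simple graph that is not a complete graph, and let F' be the graph obtained from F by adding two new vertices x and x' that are non-adjacent to each other and each adjacent to every vertex of F. Then F' has no clique cut-set, i.e., F' is an atom. -/
open SimpleGraph

/-- The graph obtained from `F` by adding two new vertices (the two elements of `Fin 2`,
on the right of the sum) that are non-adjacent to each other and complete to `V(F)`. -/
def addTwoDominating {V : Type*} (F : SimpleGraph V) : SimpleGraph (V ⊕ Fin 2) :=
  SimpleGraph.fromRel (fun p q =>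
    (∃ u v, p = Sum.inl u ∧ q = Sum.inl v ∧ F.Adj u v) ∨ (p.isLeft ∧ q.isRight))

/-- If `F` is not a complete graph, then the graph obtained from `F` by adding two new
non-adjacent vertices that are complete to the rest of the graph has no clique cut-set. -/
theorem addTwoDominating_is_atom {V : Type*} [Fintype V] (F : SimpleGraph V)
    (hnc : ∃ x y : V, x ≠ y ∧ ¬ F.Adj x y) :
    NoCliqueCutset (addTwoDominating F) := by
  intro K hK
  have hlr : ∀ (u : V) (i : Fin 2), (addTwoDominating F).Adj (Sum.inl u) (Sum.inr i) := by
    intro u i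
    simp [addTwoDominating, SimpleGraph.fromRel_adj]
  have hrr : ¬ (addTwoDominating F).Adj (Sum.inr 0) (Sum.inr 1) := by
    simp [addTwoDominating, SimpleGraph.fromRel_adj]
  obtain ⟨u, v, huv, hnadj⟩ := hnc
  have hll : ¬ (addTwoDominating F).Adj (Sum.inl u) (Sum.inl v) := by
    simp only [addTwoDominating, SimpleGraph.fromRel_adj]
    rintro ⟨-, h⟩
    rcases h with (⟨a, b, ha, hb, hab⟩ | ⟨h1, h2⟩) | (⟨a, b, ha, hb, hab⟩ | ⟨h1, h2⟩)
    · cases ha; cases hb; exact hnadj hab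
    · simp at h2
    · cases ha; cases hb; exact hnadj hab.symm
    · simp at h2
  obtain ⟨w, hw⟩ : ∃ w : V, Sum.inl w ∉ K := by
    by_cases h : Sum.inl u ∈ K
    · exact ⟨v, fun hv => hll (hK h hv (by simp [huv]))⟩
    · exact ⟨u, h⟩
  obtain ⟨r, hr⟩ : ∃ r : Fin 2, Sum.inr r ∉ K := by
    by_cases h : Sum.inr 0 ∈ K
    · exact ⟨1, fun h1 => hrr (hK h h1 (by simp))⟩
    · exact ⟨0, h⟩
  have key : ∀ (p : V ⊕ Fin 2) (hp : p ∈ (Kᶜ : Set (V ⊕ Fin 2))),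
      ((addTwoDominating F).induce (Kᶜ : Set (V ⊕ Fin 2))).Reachable ⟨p, hp⟩ ⟨Sum.inl w, hw⟩ := by
    rintro (a | i) hp
    · refine (SimpleGraph.Adj.reachable ?_ :
        ((addTwoDominating F).induce (Kᶜ : Set (V ⊕ Fin 2))).Reachable
          ⟨Sum.inl a, hp⟩ ⟨Sum.inr r, hr⟩).trans (SimpleGraph.Adj.reachable ?_)
      · exact hlr a r
      · exact (hlr w r).symm
    · exact SimpleGraph.Adj.reachable ((hlr w i).symm :
        (addTwoDominating F).Adj (Sum.inr i) (Sum.inl w))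
  intro a b
  exact (key a.1 a.2).trans (key b.1 b.2).symm
end
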